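/- Let 0<x<1 be real, and let r, s be complex numbers with 0<Re(r)<1 and Re(s)>1; set r* := r−1. Then for every complex z with |z|<x the fusion relation f₁₁(xz)·f₁₁(x^{−1}z) = Δ(z)·f₁₂(z) holds, where Δ(z) := (1−x^{r+r*}z)(1−x^{−r−r*}z)/((1−xz)(1−x^{−1}z)). -/

import Mathlib

open Complex

/-- `x^w := exp(w · log x)` for real `x` and complex `w`. -/
noncomputable def xpow (x : ℝ) (w : ℂ) : ℂ := Complex.exp (w * (Real.log x : ℂ))

/-- The infinite `q`-Pochhammer product `(z;q)_∞ = ∏_{j=0}^∞ (1 − q^j z)`. -/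
noncomputable def qPoch (z q : ℂ) : ℂ := ∏' j : ℕ, (1 - q ^ j * z)

/-- `Θ_q(z) = (z;q)_∞ (q z⁻¹;q)_∞ (q;q)_∞`. -/
noncomputable def jacTheta0 (q z : ℂ) : ℂ := qPoch z q * qPoch (q * z⁻¹) q * qPoch q q

/-- The Jacobi theta function `[u]_r = x^{u²/r − u} Θ_{x^{2r}}(x^{2u}) / ((x^{2r};x^{2r})_∞)³`. -/
noncomputable def jTheta (x : ℝ) (r u : ℂ) : ℂ :=
  xpow x (u ^ 2 / r - u) * jacTheta0 (xpow x (2 * r)) (xpow x (2 * u)) /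
    (qPoch (xpow x (2 * r)) (xpow x (2 * r))) ^ 3

/-- The `m`-th term of the defining series of `f₁₁(z)` (with `r* = r − 1`). -/
noncomputable def f11term (x : ℝ) (r s z : ℂ) (m : ℕ) : ℂ :=
  (1 / (m : ℂ)) * (1 - xpow x (2 * r * m)) * (1 - xpow x (-2 * (r - 1) * m)) *
    (1 - xpow x (2 * (s - 1) * m)) / (1 - xpow x (2 * s * m)) * z ^ m

/-- `f₁₁(z) = exp(∑_{m≥1} …)`, the structure function of the deformed Virasoro algebra. -/
noncomputable def f11 (x : ℝ) (r s z : ℂ) : ℂ :=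
  Complex.exp (∑' m : ℕ, f11term x r s z (m + 1))

/-- The `m`-th term of the defining series of `f₁₂(z)` (with `r* = r − 1`). -/
noncomputable def f12term (x : ℝ) (r s z : ℂ) (m : ℕ) : ℂ :=
  (1 / (m : ℂ)) * (1 - xpow x (2 * r * m)) * (1 - xpow x (-2 * (r - 1) * m)) *
    (1 - xpow x (2 * (s - 2) * m)) / (1 - xpow x (2 * s * m)) * ((x : ℂ) * z) ^ m

/-- `f₁₂(z) = exp(∑_{m≥1} …)`. -/
noncomputable def f12 (x : ℝ) (r s z : ℂ) : ℂ :=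
  Complex.exp (∑' m : ℕ, f12term x r s z (m + 1))

/-! The `m`-th coefficients of `log f₁₁(xz) + log f₁₁(x⁻¹z)` and of `log f₁₂(z)` differ by
`((xz)^m + (x⁻¹z)^m − (x^{2r−1}z)^m − (x^{1−2r}z)^m)/m`, a purely algebraic identity in
`x^m, x^{2rm}, x^{2(s−2)m}`. Summing, this difference is the Taylor series of
`log Δ(z)` built from `−log(1 − w) = ∑ wᵐ/m`, and exponentiating gives the fusion relation. -/

section xpow

variable {x : ℝ}

lemma xpow_add (x : ℝ) (a b : ℂ) : xpow x (a + b) = xpow x a * xpow x b := by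
  simp only [xpow, add_mul, Complex.exp_add]

lemma xpow_ne_zero (x : ℝ) (w : ℂ) : xpow x w ≠ 0 := Complex.exp_ne_zero _

lemma xpow_one (hx : 0 < x) : xpow x 1 = x := by
  rw [xpow, one_mul, ← Complex.ofReal_exp, Real.exp_log hx]

lemma xpow_neg (x : ℝ) (w : ℂ) : xpow x (-w) = (xpow x w)⁻¹ := by
  simp only [xpow, neg_mul, Complex.exp_neg]

lemma xpow_mul_natCast (x : ℝ) (w : ℂ) (n : ℕ) : xpow x (w * n) = xpow x w ^ n := by
  rw [xpow, xpow, ← Complex.exp_nat_mul]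
  ring_nf

lemma xpow_add_intCast (hx : 0 < x) (w : ℂ) (k : ℤ) : xpow x (w + k) = xpow x w * (x : ℂ) ^ k := by
  rw [xpow_add]
  congr 1
  rw [xpow, Complex.exp_int_mul, ← Complex.ofReal_exp, Real.exp_log hx]

lemma norm_xpow (hx : 0 < x) (w : ℂ) : ‖xpow x w‖ = x ^ w.re := by
  rw [xpow, Complex.norm_exp, Real.rpow_def_of_pos hx, mul_comm]
  simp

lemma norm_xpow_le_one (hx0 : 0 < x) (hx1 : x < 1) {w : ℂ} (hw : 0 ≤ w.re) : ‖xpow x w‖ ≤ 1 := by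
  rw [norm_xpow hx0]
  exact Real.rpow_le_one hx0.le hx1.le hw

lemma norm_xpow_lt_one (hx0 : 0 < x) (hx1 : x < 1) {w : ℂ} (hw : 0 < w.re) : ‖xpow x w‖ < 1 := by
  rw [norm_xpow hx0]
  exact Real.rpow_lt_one hx0.le hx1 hw

lemma norm_xpow_mul_lt_one (hx0 : 0 < x) (hx1 : x < 1) {w z : ℂ} (hw : -1 ≤ w.re)
    (hz : ‖z‖ < x) : ‖xpow x w * z‖ < 1 :=
  calc ‖xpow x w * z‖ < x ^ w.re * x := by
        rw [norm_mul, norm_xpow hx0]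
        exact mul_lt_mul_of_pos_left hz (Real.rpow_pos_of_pos hx0 _)
    _ = x ^ (w.re + 1) := (Real.rpow_add_one hx0.ne' _).symm
    _ ≤ 1 := Real.rpow_le_one hx0.le hx1.le (by linarith)

end xpow

lemma one_sub_ne_zero_of_norm_lt_one {R : Type*} [NormedRing R] [NormOneClass R] {w : R}
    (hw : ‖w‖ < 1) : 1 - w ≠ 0 :=
  sub_ne_zero.mpr fun h => by simp [← h] at hw

noncomputable def structureTerm (a b c d w : ℂ) (m : ℕ) : ℂ :=
  1 / (m : ℂ) * (1 - a ^ m) * (1 - b ^ m) * (1 - c ^ m) / (1 - d ^ m) * w ^ m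

lemma summable_structureTerm {a b c d w : ℂ} (ha : ‖a‖ ≤ 1) (hb : ‖b‖ ≤ 1) (hd : ‖d‖ < 1)
    (hw : ‖w‖ < 1) (hcw : ‖c * w‖ < 1) :
    Summable fun m => structureTerm a b c d w (m + 1) := by
  have hgeom : Summable fun m : ℕ => 4 / (1 - ‖d‖) * (‖w‖ ^ (m + 1) + ‖c * w‖ ^ (m + 1)) :=
    (((summable_nat_add_iff 1).mpr (summable_geometric_of_lt_one (norm_nonneg _) hw)).add
      ((summable_nat_add_iff 1).mpr (summable_geometric_of_lt_one (norm_nonneg _) hcw))).mul_left _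
  refine hgeom.of_norm_bounded fun m => ?_
  have hinv : ‖1 / ((m + 1 : ℕ) : ℂ)‖ ≤ 1 := by
    rw [norm_div, norm_one, Complex.norm_natCast]
    exact div_le_one_of_le₀ (by simp) (by positivity)
  have hbound {e : ℂ} (he : ‖e‖ ≤ 1) : ‖1 - e ^ (m + 1)‖ ≤ 2 :=
    (norm_sub_le _ _).trans <| by
      simp only [norm_one, norm_pow]; linarith [pow_le_one₀ (n := m + 1) (norm_nonneg e) he]
  have hc : ‖1 - c ^ (m + 1)‖ ≤ 1 + ‖c‖ ^ (m + 1) := by simpa using norm_sub_le 1 (c ^ (m + 1))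
  have hd' : 1 - ‖d‖ ≤ ‖1 - d ^ (m + 1)‖ :=
    calc 1 - ‖d‖ ≤ 1 - ‖d‖ ^ (m + 1) := by
          gcongr; exact pow_le_of_le_one (norm_nonneg d) hd.le (by simp)
      _ ≤ ‖1 - d ^ (m + 1)‖ := by simpa using norm_sub_norm_le (1 : ℂ) (d ^ (m + 1))
  have hd0 : 0 < 1 - ‖d‖ := by linarith
  calc ‖structureTerm a b c d w (m + 1)‖
      = ‖1 / ((m + 1 : ℕ) : ℂ)‖ * ‖1 - a ^ (m + 1)‖ * ‖1 - b ^ (m + 1)‖ * ‖1 - c ^ (m + 1)‖ /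
          ‖1 - d ^ (m + 1)‖ * ‖w‖ ^ (m + 1) := by
        simp only [structureTerm, norm_mul, norm_div, norm_pow]
    _ ≤ 1 * 2 * 2 * (1 + ‖c‖ ^ (m + 1)) / (1 - ‖d‖) * ‖w‖ ^ (m + 1) := by
        gcongr
        exacts [hbound ha, hbound hb]
    _ = 4 / (1 - ‖d‖) * (‖w‖ ^ (m + 1) + ‖c * w‖ ^ (m + 1)) := by
        rw [norm_mul, mul_pow]; ring

/-- Behind it: `(1 − g u²)(u + u⁻¹) − (1 − g) u = u⁻¹ (1 − g u⁴)` (applied to the `m`-th powers),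
so the denominator `1 − (g u⁴)^m` cancels from the difference of the two sides. -/
lemma structureTerm_fusion {a u g : ℂ} (z : ℂ) {m : ℕ} (ha : a ≠ 0) (hu : u ≠ 0)
    (hd : 1 - (g * u ^ 4) ^ m ≠ 0) :
    structureTerm a (a⁻¹ * u ^ 2) (g * u ^ 2) (g * u ^ 4) (u * z) m +
        structureTerm a (a⁻¹ * u ^ 2) (g * u ^ 2) (g * u ^ 4) (u⁻¹ * z) m =
      structureTerm a (a⁻¹ * u ^ 2) g (g * u ^ 4) (u * z) m +
        ((u * z) ^ m + (u⁻¹ * z) ^ m - (a * u⁻¹ * z) ^ m - (a⁻¹ * u * z) ^ m) / m := by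
  simp only [structureTerm, mul_pow, inv_pow] at hd ⊢
  have hum : u ^ m ≠ 0 := pow_ne_zero m hu
  have ham : a ^ m ≠ 0 := pow_ne_zero m ha
  field_simp
  ring

lemma hasSum_pow_succ_div_succ {w : ℂ} (hw : ‖w‖ < 1) :
    HasSum (fun m : ℕ => w ^ (m + 1) / (m + 1 : ℕ)) (-Complex.log (1 - w)) :=
  (hasSum_nat_add_iff (f := fun n : ℕ => w ^ n / n) 1).mpr
    (by simpa using Complex.hasSum_taylorSeries_neg_log hw)

lemma exists_hasSum_exp_eq_div {w₁ w₂ w₃ w₄ : ℂ} (h₁ : ‖w₁‖ < 1) (h₂ : ‖w₂‖ < 1)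
    (h₃ : ‖w₃‖ < 1) (h₄ : ‖w₄‖ < 1) :
    ∃ L, HasSum (fun m : ℕ =>
        (w₁ ^ (m + 1) + w₂ ^ (m + 1) - w₃ ^ (m + 1) - w₄ ^ (m + 1)) / (m + 1 : ℕ)) L ∧
      Complex.exp L = (1 - w₃) * (1 - w₄) / ((1 - w₁) * (1 - w₂)) := by
  have hne {w : ℂ} (hw : ‖w‖ < 1) : 1 - w ≠ 0 := one_sub_ne_zero_of_norm_lt_one hw
  refine ⟨_, (((hasSum_pow_succ_div_succ h₁).add (hasSum_pow_succ_div_succ h₂)).sub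
    (hasSum_pow_succ_div_succ h₃)).sub (hasSum_pow_succ_div_succ h₄) |>.congr_fun ?_, ?_⟩
  · intro m
    ring
  · simp only [Complex.exp_sub, Complex.exp_add, Complex.exp_neg,
      Complex.exp_log (hne h₁), Complex.exp_log (hne h₂), Complex.exp_log (hne h₃),
      Complex.exp_log (hne h₄)]
    field_simp

section deformedVirasoro

variable {x : ℝ} {r s : ℂ}

lemma f11term_eq_structureTerm (r s w : ℂ) (m : ℕ) :
    f11term x r s w m = structureTerm (xpow x (2 * r)) (xpow x (-2 * (r - 1)))
      (xpow x (2 * (s - 1))) (xpow x (2 * s)) w m := by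
  simp only [f11term, structureTerm, xpow_mul_natCast]

lemma f12term_eq_structureTerm (r s z : ℂ) (m : ℕ) :
    f12term x r s z m = structureTerm (xpow x (2 * r)) (xpow x (-2 * (r - 1)))
      (xpow x (2 * (s - 2))) (xpow x (2 * s)) (x * z) m := by
  simp only [f12term, structureTerm, xpow_mul_natCast]

lemma summable_f11term (hx0 : 0 < x) (hx1 : x < 1) (hr0 : 0 ≤ r.re) (hr1 : r.re ≤ 1)
    (hs : 1 ≤ s.re) {w : ℂ} (hw : ‖w‖ < 1) : Summable fun m => f11term x r s w (m + 1) := by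
  simp only [f11term_eq_structureTerm]
  refine summable_structureTerm (norm_xpow_le_one hx0 hx1 ?_) (norm_xpow_le_one hx0 hx1 ?_)
    (norm_xpow_lt_one hx0 hx1 ?_) hw ?_
  · linarith [show (2 * r).re = 2 * r.re by simp]
  · linarith [show (-2 * (r - 1)).re = 2 - 2 * r.re by simp; ring]
  · linarith [show (2 * s).re = 2 * s.re by simp]
  · have hc : ‖xpow x (2 * (s - 1))‖ ≤ 1 :=
      norm_xpow_le_one hx0 hx1 (by linarith [show (2 * (s - 1)).re = 2 * s.re - 2 by simp; ring])
    rw [norm_mul]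
    exact (mul_le_of_le_one_left (norm_nonneg w) hc).trans_lt hw

lemma summable_f12term (hx0 : 0 < x) (hx1 : x < 1) (hr0 : 0 ≤ r.re) (hr1 : r.re ≤ 1)
    (hs : 1 ≤ s.re) {z : ℂ} (hz : ‖z‖ < x) : Summable fun m => f12term x r s z (m + 1) := by
  simp only [f12term_eq_structureTerm]
  refine summable_structureTerm (norm_xpow_le_one hx0 hx1 ?_) (norm_xpow_le_one hx0 hx1 ?_)
    (norm_xpow_lt_one hx0 hx1 ?_) ?_ ?_
  · linarith [show (2 * r).re = 2 * r.re by simp]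
  · linarith [show (-2 * (r - 1)).re = 2 - 2 * r.re by simp; ring]
  · linarith [show (2 * s).re = 2 * s.re by simp]
  · simpa [xpow_one hx0] using norm_xpow_mul_lt_one hx0 hx1 (w := 1) (by simp) hz
  · rw [← mul_assoc, ← xpow_one hx0, ← xpow_add]
    exact norm_xpow_mul_lt_one hx0 hx1
      (by linarith [show (2 * (s - 2) + 1).re = 2 * s.re - 3 by simp; ring]) hz

lemma f11term_fusion (hx0 : 0 < x) (hx1 : x < 1) (hs : 0 < s.re) (z : ℂ) (m : ℕ) :
    f11term x r s (x * z) (m + 1) + f11term x r s ((x : ℂ)⁻¹ * z) (m + 1) =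
      f12term x r s z (m + 1) +
        ((x * z) ^ (m + 1) + ((x : ℂ)⁻¹ * z) ^ (m + 1) - (xpow x (2 * r - 1) * z) ^ (m + 1) -
          (xpow x (-(2 * r - 1)) * z) ^ (m + 1)) / (m + 1 : ℕ) := by
  have hb : xpow x (-2 * (r - 1)) = (xpow x (2 * r))⁻¹ * (x : ℂ) ^ 2 := by
    rw [show -2 * (r - 1) = -(2 * r) + (2 : ℤ) by push_cast; ring, xpow_add_intCast hx0, xpow_neg]
    simp
  have hc : xpow x (2 * (s - 1)) = xpow x (2 * (s - 2)) * (x : ℂ) ^ 2 := by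
    rw [show 2 * (s - 1) = 2 * (s - 2) + (2 : ℤ) by push_cast; ring, xpow_add_intCast hx0]
    simp
  have hd : xpow x (2 * s) = xpow x (2 * (s - 2)) * (x : ℂ) ^ 4 := by
    rw [show 2 * s = 2 * (s - 2) + (4 : ℤ) by push_cast; ring, xpow_add_intCast hx0]
    simp
  have hp : xpow x (2 * r - 1) = xpow x (2 * r) * (x : ℂ)⁻¹ := by
    rw [show 2 * r - 1 = 2 * r + (-1 : ℤ) by push_cast; ring, xpow_add_intCast hx0]
    simp
  have hq : xpow x (-(2 * r - 1)) = (xpow x (2 * r))⁻¹ * x := by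
    rw [show -(2 * r - 1) = -(2 * r) + (1 : ℤ) by push_cast; ring, xpow_add_intCast hx0, xpow_neg]
    simp
  have hden : 1 - (xpow x (2 * (s - 2)) * (x : ℂ) ^ 4) ^ (m + 1) ≠ 0 := by
    rw [← hd]
    refine one_sub_ne_zero_of_norm_lt_one ?_
    rw [norm_pow]
    exact pow_lt_one₀ (norm_nonneg _)
      (norm_xpow_lt_one hx0 hx1 (by simpa using hs)) (Nat.succ_ne_zero m)
  simp only [f11term_eq_structureTerm, f12term_eq_structureTerm, hb, hc, hd, hp, hq]
  exact structureTerm_fusion z (xpow_ne_zero _ _) (by exact_mod_cast hx0.ne') hden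

end deformedVirasoro

theorem stmt6 (x : ℝ) (hx0 : 0 < x) (hx1 : x < 1) (r s : ℂ)
    (hr0 : 0 < r.re) (hr1 : r.re < 1) (hs : 1 < s.re) (z : ℂ) (hz : ‖z‖ < x) :
    f11 x r s ((x : ℂ) * z) * f11 x r s (((x : ℂ))⁻¹ * z) =
      ((1 - xpow x (2 * r - 1) * z) * (1 - xpow x (-(2 * r - 1)) * z) /
        ((1 - (x : ℂ) * z) * (1 - ((x : ℂ))⁻¹ * z))) * f12 x r s z := by
  have hxz : ‖(x : ℂ) * z‖ < 1 := by
    simpa [xpow_one hx0] using norm_xpow_mul_lt_one hx0 hx1 (w := 1) (by simp) hz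
  have hxz' : ‖(x : ℂ)⁻¹ * z‖ < 1 := by
    simpa [xpow_neg, xpow_one hx0] using norm_xpow_mul_lt_one hx0 hx1 (w := -1) (by simp) hz
  obtain ⟨L, hL, hexpL⟩ := exists_hasSum_exp_eq_div hxz hxz'
    (norm_xpow_mul_lt_one hx0 hx1 (w := 2 * r - 1)
      (by linarith [show (2 * r - 1).re = 2 * r.re - 1 by simp]) hz)
    (norm_xpow_mul_lt_one hx0 hx1 (w := -(2 * r - 1))
      (by linarith [show (-(2 * r - 1)).re = 1 - 2 * r.re by simp]) hz)
  have hfusion : HasSum (fun m => f11term x r s (x * z) (m + 1) +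
      f11term x r s ((x : ℂ)⁻¹ * z) (m + 1)) ((∑' m, f12term x r s z (m + 1)) + L) := by
    simpa only [f11term_fusion hx0 hx1 (by linarith) z] using
      (summable_f12term hx0 hx1 hr0.le hr1.le hs.le hz).hasSum.add hL
  rw [f11, f11, f12, ← Complex.exp_add,
    ← (summable_f11term hx0 hx1 hr0.le hr1.le hs.le hxz).tsum_add
      (summable_f11term hx0 hx1 hr0.le hr1.le hs.le hxz'),
    hfusion.tsum_eq, Complex.exp_add, hexpL, mul_comm]
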